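/- Let t ≥ 1 be an integer and let H be a finite hypergraph with VC-dimension d ≥ 1. Then d ≤ VC_t(H) ≤ 2·γ₂·max{d, t−1}, where γ₂ = 1/(2·h^{-1}(1/2)) (γ₂ ≈ 4.54). -/

import Mathlib

/-!
If `T` is `t`-shattered, every `T' ⊆ T` is obtained from some trace `T ∩ e` by removing fewer
than `t` of its elements, so `2^|T| ≤ |Π_H(T)| · #{W ⊆ T : |W| < t}`. By the Sauer–Shelah lemma
both factors are at most `∑_{i ≤ k} C(|T|, i)` with `k = max d (t - 1)`, and for `2k ≤ |T|` this
sum is at most `2^(|T| h(k/|T|))`, since it is dominated termwise by the binomial expansion of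
`(p + (1 - p))^|T|` for `p = k/|T|`. Hence either `|T| ≤ 2k`, or `h(k/|T|) ≥ 1/2`, which by
monotonicity of `h` on `[0, 1/2]` means `k/|T| ≥ h⁻¹(1/2)`.
-/

/-- `A` is shattered by the hyperedge family `E`. -/
def Shatters {V : Type*} [DecidableEq V] (E : Finset (Finset V)) (A : Finset V) : Prop :=
  ∀ B ⊆ A, ∃ e ∈ E, A ∩ e = B

/-- The hypergraph with hyperedge family `E` has VC-dimension exactly `d`. -/
def IsVCDim {V : Type*} [DecidableEq V] (E : Finset (Finset V)) (d : ℕ) : Prop :=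
  (∃ A : Finset V, Shatters E A ∧ A.card = d) ∧
  ∀ A : Finset V, Shatters E A → A.card ≤ d

/-- `T'` is `t`-realized by the hyperedge family `E` with respect to `T`:
`T' ∪ W ∈ Π_H(T)` for some `W ⊆ T` with `|W| < t`. -/
def TRealized {V : Type*} [DecidableEq V] (E : Finset (Finset V)) (t : ℕ)
    (T T' : Finset V) : Prop :=
  ∃ W ⊆ T, W.card < t ∧ ∃ e ∈ E, T ∩ e = T' ∪ W

/-- `T` is `t`-shattered by the hyperedge family `E`. -/
def TShattered {V : Type*} [DecidableEq V] (E : Finset (Finset V)) (t : ℕ)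
    (T : Finset V) : Prop :=
  ∀ T' ⊆ T, TRealized E t T T'

/-- The hypergraph with hyperedge family `E` has `t`-VC-dimension exactly `d`. -/
def IsTVCDim {V : Type*} [DecidableEq V] (E : Finset (Finset V)) (t d : ℕ) : Prop :=
  (∃ T : Finset V, TShattered E t T ∧ T.card = d) ∧
  ∀ T : Finset V, TShattered E t T → T.card ≤ d

/-- `A` `t`-stabs `B`: every hyperedge containing `B` contains at least `t` vertices of `A`. -/
def TStabs {V : Type*} [DecidableEq V] (E : Finset (Finset V)) (t : ℕ)
    (A B : Finset V) : Prop :=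
  ∀ e ∈ E, B ⊆ e → t ≤ (e ∩ A).card

instance {V : Type*} [DecidableEq V] (E : Finset (Finset V)) (t : ℕ) (A B : Finset V) :
    Decidable (TStabs E t A B) :=
  inferInstanceAs (Decidable (∀ e ∈ E, B ⊆ e → t ≤ (e ∩ A).card))

/-- The binary entropy function (all logarithms base 2). -/
noncomputable def binEntropy (x : ℝ) : ℝ :=
  -x * Real.logb 2 x - (1 - x) * Real.logb 2 (1 - x)

open Finset

section Combinatorics

variable {V : Type*} [DecidableEq V] {E : Finset (Finset V)} {t d : ℕ} {A T : Finset V}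

lemma Shatters.tShattered (hA : _root_.Shatters E A) (ht : 1 ≤ t) : TShattered E t A := by
  intro B hB
  obtain ⟨e, he, hAe⟩ := hA B hB
  exact ⟨∅, empty_subset _, by rwa [card_empty], e, he, by rw [hAe, union_empty]⟩

lemma shatters_of_shatters_image_inter (h : (E.image (T ∩ ·)).Shatters A) :
    _root_.Shatters E A := by
  obtain ⟨_, hu, hAT⟩ := h.exists_superset
  obtain ⟨e, -, rfl⟩ := mem_image.1 hu
  intro B hB
  obtain ⟨_, hu', rfl⟩ := h hB
  obtain ⟨e', he', rfl⟩ := mem_image.1 hu'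
  exact ⟨e', he', by rw [← inter_assoc, inter_eq_left.2 (hAT.trans inter_subset_left)]⟩

lemma card_filter_powerset_card_le (T : Finset V) (k : ℕ) :
    #{A ∈ T.powerset | #A ≤ k} ≤ ∑ i ∈ Iic k, (#T).choose i := by
  simp_rw [← card_powersetCard]
  refine (card_le_card fun A hA ↦ mem_biUnion.2 ⟨#A, ?_⟩).trans card_biUnion_le
  rw [mem_filter, mem_powerset] at hA
  exact ⟨mem_Iic.2 hA.2, mem_powersetCard.2 ⟨hA.1, rfl⟩⟩

lemma card_image_inter_le_card_filter_powerset (hE : ∀ A, _root_.Shatters E A → #A ≤ d)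
    (T : Finset V) : #(E.image (T ∩ ·)) ≤ #{A ∈ T.powerset | #A ≤ d} := by
  refine (card_le_card_shatterer _).trans (card_le_card fun A hA ↦ ?_)
  have hA := mem_shatterer.1 hA
  obtain ⟨_, hu, hAu⟩ := hA.exists_superset
  obtain ⟨e, -, rfl⟩ := mem_image.1 hu
  exact mem_filter.2 ⟨mem_powerset.2 (hAu.trans inter_subset_left),
    hE A (shatters_of_shatters_image_inter hA)⟩

lemma TShattered.two_pow_card_le (hT : TShattered E t T) :
    2 ^ #T ≤ #(E.image (T ∩ ·)) * #{W ∈ T.powerset | #W < t} := by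
  have hcover :
      T.powerset ⊆ (E.image (T ∩ ·)).biUnion fun s ↦ {B ∈ s.powerset | #(s \ B) < t} := by
    intro B hB
    obtain ⟨W, -, hW, e, he, hTe⟩ := hT B (mem_powerset.1 hB)
    refine mem_biUnion.2 ⟨T ∩ e, mem_image_of_mem _ he, mem_filter.2 ⟨?_, ?_⟩⟩
    · rw [hTe, mem_powerset]
      exact subset_union_left
    · rw [hTe, union_sdiff_left]
      exact (card_le_card sdiff_subset).trans_lt hW
  have hfiber : ∀ s ∈ E.image (T ∩ ·),
      #{B ∈ s.powerset | #(s \ B) < t} ≤ #{W ∈ T.powerset | #W < t} := by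
    intro s hs
    obtain ⟨e, -, rfl⟩ := mem_image.1 hs
    refine card_le_card_of_injOn (fun B ↦ (T ∩ e) \ B) (fun B hB ↦ ?_) (fun B hB B' hB' h ↦ ?_)
    · simp only [coe_filter, mem_powerset, Set.mem_ofPred_eq] at hB ⊢
      exact ⟨sdiff_subset.trans inter_subset_left, hB.2⟩
    · simp only [coe_filter, mem_powerset, Set.mem_ofPred_eq] at hB hB' h
      rw [← Finset.sdiff_sdiff_eq_self hB.1, h, Finset.sdiff_sdiff_eq_self hB'.1]
  calc 2 ^ #T = #T.powerset := (card_powerset T).symm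
    _ ≤ _ := card_le_card hcover
    _ ≤ _ := card_biUnion_le_card_mul _ _ _ hfiber

lemma TShattered.two_pow_card_le_sq_sum_choose (hT : TShattered E t T)
    (hE : ∀ A, _root_.Shatters E A → #A ≤ d) :
    2 ^ #T ≤ (∑ i ∈ Iic (max d (t - 1)), (#T).choose i) ^ 2 := by
  calc 2 ^ #T ≤ #(E.image (T ∩ ·)) * #{W ∈ T.powerset | #W < t} := hT.two_pow_card_le
    _ ≤ #{A ∈ T.powerset | #A ≤ max d (t - 1)} * #{A ∈ T.powerset | #A ≤ max d (t - 1)} := by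
        refine Nat.mul_le_mul ((card_image_inter_le_card_filter_powerset hE T).trans ?_) ?_
        all_goals
          gcongr with A _ hA
          omega
    _ ≤ _ := by
        rw [← sq]
        gcongr
        exact card_filter_powerset_card_le T _

end Combinatorics

section Entropy

lemma binEntropy_eq_div_log_two (p : ℝ) : binEntropy p = Real.binEntropy p / Real.log 2 := by
  simp only [binEntropy, Real.binEntropy, Real.logb, Real.log_inv]
  ring

lemma binEntropy_strictMonoOn : StrictMonoOn binEntropy (Set.Icc 0 (1 / 2)) := by
  intro p hp q hq hpq
  rw [binEntropy_eq_div_log_two, binEntropy_eq_div_log_two, one_div] at *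
  exact div_lt_div_of_pos_right (Real.binEntropy_strictMonoOn hp hq hpq) (Real.log_pos one_lt_two)

lemma sum_choose_mul_pow_le_one {m k : ℕ} {p : ℝ} (hkm : k ≤ m) (hp0 : 0 ≤ p) (hp : p ≤ 1 / 2) :
    (∑ i ∈ Iic k, (m.choose i : ℝ)) * (p ^ k * (1 - p) ^ (m - k)) ≤ 1 := by
  have hq : 0 ≤ 1 - p := by linarith
  calc _ = ∑ i ∈ Iic k, (m.choose i : ℝ) * (p ^ k * (1 - p) ^ (m - k)) := sum_mul ..
    _ ≤ ∑ i ∈ Iic k, (m.choose i : ℝ) * (p ^ i * (1 - p) ^ (m - i)) := by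
        refine sum_le_sum fun i hi ↦ mul_le_mul_of_nonneg_left ?_ (Nat.cast_nonneg _)
        have hik := mem_Iic.1 hi
        calc p ^ k * (1 - p) ^ (m - k) = p ^ i * (p ^ (k - i) * (1 - p) ^ (m - k)) := by
              rw [← mul_assoc, ← pow_add, Nat.add_sub_cancel' hik]
          _ ≤ p ^ i * ((1 - p) ^ (k - i) * (1 - p) ^ (m - k)) := by gcongr; linarith
          _ = p ^ i * (1 - p) ^ (m - i) := by rw [← pow_add]; congr 2; omega
    _ ≤ ∑ i ∈ range (m + 1), (m.choose i : ℝ) * (p ^ i * (1 - p) ^ (m - i)) := by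
        refine sum_le_sum_of_subset_of_nonneg (fun i hi ↦ ?_) fun i _ _ ↦ by positivity
        rw [mem_range]
        have := mem_Iic.1 hi
        omega
    _ = (p + (1 - p)) ^ m := by
        rw [add_pow]
        exact sum_congr rfl fun i _ ↦ by ring
    _ = 1 := by rw [add_sub_cancel, one_pow]

lemma logb_sum_choose_le_mul_binEntropy {m k : ℕ} (hkm : 2 * k ≤ m) :
    Real.logb 2 (∑ i ∈ Iic k, (m.choose i : ℝ)) ≤ m * binEntropy (k / m) := by
  rcases Nat.eq_zero_or_pos k with rfl | hk
  · simp [binEntropy, Iic_ofNat]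
  set p : ℝ := k / m
  have hm : (0 : ℝ) < m := by exact_mod_cast (by omega : 0 < m)
  have hp0 : 0 < p := by positivity
  have hp : p ≤ 1 / 2 := by
    rw [div_le_iff₀ hm]
    have : (2 * k : ℝ) ≤ m := by exact_mod_cast hkm
    linarith
  have hmp : m * p = k := mul_div_cancel₀ _ hm.ne'
  have hmq : m * (1 - p) = (m - k : ℕ) := by
    push_cast [(by omega : k ≤ m)]
    linarith
  have hq : 0 < 1 - p := by linarith
  have hX : 0 < p ^ k * (1 - p) ^ (m - k) := by positivity
  have hS : 0 < ∑ i ∈ Iic k, (m.choose i : ℝ) :=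
    sum_pos (fun i hi ↦ Nat.cast_pos.2 (Nat.choose_pos (by have := mem_Iic.1 hi; omega)))
      nonempty_Iic
  calc Real.logb 2 (∑ i ∈ Iic k, (m.choose i : ℝ))
      ≤ Real.logb 2 (p ^ k * (1 - p) ^ (m - k))⁻¹ := by
        refine Real.logb_le_logb_of_le one_lt_two hS ?_
        rw [← one_div, le_div_iff₀ hX]
        exact sum_choose_mul_pow_le_one (by omega) hp0.le hp
    _ = -(k * Real.logb 2 p + (m - k : ℕ) * Real.logb 2 (1 - p)) := by
        rw [Real.logb_inv, Real.logb_mul (by positivity) (by positivity), Real.logb_pow,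
          Real.logb_pow]
    _ = m * binEntropy p := by
        rw [← hmp, ← hmq, binEntropy]
        ring

lemma le_div_of_two_pow_le_sq_sum_choose {m k : ℕ} {x : ℝ} (hx : x ∈ Set.Ioc 0 (1 / 2))
    (hxe : binEntropy x = 1 / 2) (h : 2 ^ m ≤ (∑ i ∈ Iic k, m.choose i) ^ 2) :
    (m : ℝ) ≤ k / x := by
  rw [le_div_iff₀ hx.1]
  rcases le_or_gt m (2 * k) with hmk | hmk
  · have : (m : ℝ) ≤ 2 * k := by exact_mod_cast hmk
    nlinarith [hx.2]
  have hm : (0 : ℝ) < m := by exact_mod_cast (by omega : 0 < m)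
  have hkm : (k : ℝ) / m ≤ 1 / 2 := by
    rw [div_le_iff₀ hm]
    have : (2 * k : ℝ) ≤ m := by exact_mod_cast hmk.le
    linarith
  have hentropy : binEntropy x ≤ binEntropy (k / m) := by
    have hS : (2 : ℝ) ^ m ≤ (∑ i ∈ Iic k, (m.choose i : ℝ)) ^ 2 := by exact_mod_cast h
    have hlog : (m : ℝ) ≤ 2 * Real.logb 2 (∑ i ∈ Iic k, (m.choose i : ℝ)) := by
      calc (m : ℝ) = Real.logb 2 (2 ^ m) := by simp [Real.logb_pow]
        _ ≤ Real.logb 2 ((∑ i ∈ Iic k, (m.choose i : ℝ)) ^ 2) :=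
            Real.logb_le_logb_of_le one_lt_two (by positivity) hS
        _ = _ := by rw [Real.logb_pow]; push_cast; ring
    nlinarith [logb_sum_choose_le_mul_binEntropy hmk.le]
  have hxk := (binEntropy_strictMonoOn.le_iff_le ⟨hx.1.le, hx.2⟩ ⟨by positivity, hkm⟩).1 hentropy
  rwa [le_div_iff₀ hm, mul_comm] at hxk

end Entropy

theorem t_vc_dim_vs_vc_dim_general {V : Type*} [Fintype V] [DecidableEq V] (E : Finset (Finset V))
    (t : ℕ) (ht : 1 ≤ t) (d : ℕ) (hvc : IsVCDim E d)
    -- `x = h⁻¹(1/2)`, so that `γ₂ = 1/(2*x)`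
    (x : ℝ) (hx : x ∈ Set.Ioc (0 : ℝ) (1 / 2)) (hxe : binEntropy x = 1 / 2)
    (d' : ℕ) (hvc' : IsTVCDim E t d') :
    d ≤ d' ∧ (d' : ℝ) ≤ 2 * (1 / (2 * x)) * max (d : ℝ) ((t : ℝ) - 1) := by
  obtain ⟨⟨A, hA, rfl⟩, hVC⟩ := hvc
  obtain ⟨⟨T, hT, rfl⟩, hTVC⟩ := hvc'
  refine ⟨hTVC A (hA.tShattered ht), ?_⟩
  have hk : ((max #A (t - 1) : ℕ) : ℝ) = max (#A : ℝ) ((t : ℝ) - 1) := by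
    push_cast [ht]
    rfl
  calc (#T : ℝ) ≤ (max #A (t - 1) : ℕ) / x :=
        le_div_of_two_pow_le_sq_sum_choose hx hxe (hT.two_pow_card_le_sq_sum_choose hVC)
    _ = _ := by
        rw [hk]
        field_simp

theorem t_vc_dim_vs_vc_dim {V : Type*} [Fintype V] [DecidableEq V] (E : Finset (Finset V))
    (t : ℕ) (ht : 1 ≤ t) (d : ℕ) (hd : 1 ≤ d) (hvc : IsVCDim E d)
    -- `x = h⁻¹(1/2)`, so that `γ₂ = 1/(2*x)`
    (x : ℝ) (hx : x ∈ Set.Ioc (0 : ℝ) (1 / 2)) (hxe : binEntropy x = 1 / 2)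
    (d' : ℕ) (hvc' : IsTVCDim E t d') :
    d ≤ d' ∧ (d' : ℝ) ≤ 2 * (1 / (2 * x)) * max (d : ℝ) ((t : ℝ) - 1) :=
  t_vc_dim_vs_vc_dim_general E t ht d hvc x hx hxe d' hvc'
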